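/- Let H ≥ 1 and K ≥ 1 be integers and let v ∈ 𝒱_{H,K} be an H-achievable vector. Then every u : Fin K → ℝ satisfying u k ≥ v k for all k ∈ Fin K and u ≠ v satisfies D_{H,K}(u) > 0. -/
import Mathlib


open scoped BigOperators

noncomputable section

def simplexInt (K : ℕ) : Set (Fin K → ℝ) :=
  {r | (∀ k, 0 < r k) ∧ ∑ k, r k = 1}

/-- Rising factorial `a^{(j)} = a (a+1) ⋯ (a+j-1)`. -/
def rise (a : ℝ) (j : ℕ) : ℝ := ∏ i ∈ Finset.range j, (a + i)

/-- Elementary symmetric polynomial of degree `m` in the coordinates of `v`. -/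
def esymm {K : ℕ} (m : ℕ) (v : Fin K → ℝ) : ℝ :=
  ∑ S ∈ Finset.univ.powersetCard m, ∏ k ∈ S, v k

/-- `D_{H,K}(v) = ∑_{m=0}^K (−H)^{(K−m)} σ_m(v)`. -/
def D (H K : ℕ) (v : Fin K → ℝ) : ℝ :=
  ∑ m ∈ Finset.range (K + 1), rise (-(H : ℝ)) (K - m) * esymm m v

/-- A vector `v` is `(H'+1)`-achievable if there is a bookmaking strategy `Ψ`
such that every decisive bet sequence yields total payout `v k*` on the last bet `k*`. -/
def Achievable (K H' : ℕ) (v : Fin K → ℝ) : Prop :=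
  ∃ Ψ : (h : Fin (H' + 1)) → (Fin h.val → Fin K) → (Fin K → ℝ),
    (∀ h hist, Ψ h hist ∈ simplexInt K) ∧
    ∀ q : Fin (H' + 1) → Fin K,
      (∑ h : Fin (H' + 1),
        if q h = q (Fin.last H')
        then 1 / Ψ h (fun i => q (Fin.castLE h.isLt.le i)) (q (Fin.last H'))
        else 0) = v (q (Fin.last H'))


namespace BookmakingAux

open Finset

lemma rise_succ (a : ℝ) (n : ℕ) : rise a (n+1) = rise a n * (a + n) :=
  Finset.prod_range_succ _ _

lemma rise_pred (a : ℝ) (j : ℕ) :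
    rise (a - 1) j = rise a j - j * rise a (j - 1) := by
  cases j with
  | zero => simp [rise]
  | succ n =>
    have h1 : rise (a - 1) (n+1) = rise a n * (a - 1) := by
      rw [rise, Finset.prod_range_succ']
      rw [Finset.prod_congr rfl (fun i _ => show a - 1 + ((i+1 : ℕ) : ℝ) = a + i by
        push_cast; ring)]
      simp [rise]
    rw [h1, rise_succ, show (n + 1 : ℕ) - 1 = n from rfl]
    push_cast; ring

def esymmAway {K : ℕ} (m : ℕ) (k : Fin K) (u : Fin K → ℝ) : ℝ :=
  ∑ S ∈ (Finset.univ.erase k).powersetCard m, ∏ j ∈ S, u j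

def Dk (H : ℕ) {K : ℕ} (k : Fin K) (u : Fin K → ℝ) : ℝ :=
  ∑ m ∈ Finset.range K, rise (-(H : ℝ)) (K - 1 - m) * esymmAway m k u

lemma esymm_zero {K : ℕ} (u : Fin K → ℝ) : esymm 0 u = 1 := by
  simp [esymm]

lemma esymm_split {K : ℕ} (f : Fin K → ℝ) (k : Fin K) (m : ℕ) :
    esymm (m+1) f = (∑ S ∈ (univ.erase k).powersetCard (m+1), ∏ j ∈ S, f j)
      + f k * ∑ S ∈ (univ.erase k).powersetCard m, ∏ j ∈ S, f j := by
  unfold esymm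
  have h2 := powersetCard_succ_insert (notMem_erase k (univ : Finset (Fin K))) m
  rw [insert_erase (mem_univ k)] at h2
  rw [h2]
  have hdisj : Disjoint ((univ.erase k).powersetCard (m+1))
      (((univ.erase k).powersetCard m).image (insert k)) := by
    rw [disjoint_left]
    intro S hS hS'
    obtain ⟨T, hT, hTeq⟩ := mem_image.mp hS'
    have hk : k ∉ S := fun hkS => (notMem_erase k univ) ((mem_powersetCard.mp hS).1 hkS)
    exact hk (hTeq ▸ mem_insert_self k T)
  rw [sum_union hdisj]
  congr 1
  rw [sum_image]
  · rw [mul_sum]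
    refine sum_congr rfl fun T hT => ?_
    have hkT : k ∉ T := fun h => (notMem_erase k univ) ((mem_powersetCard.mp hT).1 h)
    rw [prod_insert hkT]
  · intro x hx y hy hxy
    have hkx : k ∉ x := fun h => (notMem_erase k univ) ((mem_powersetCard.mp hx).1 h)
    have hky : k ∉ y := fun h => (notMem_erase k univ) ((mem_powersetCard.mp hy).1 h)
    rw [← erase_insert hkx, ← erase_insert hky, hxy]

lemma esymm_sub {K : ℕ} (u : Fin K → ℝ) (k : Fin K) (t : ℝ) (m : ℕ) :
    esymm (m+1) (fun j => u j - if j = k then t else 0)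
      = esymm (m+1) u - t * esymmAway m k u := by
  rw [esymm_split (fun j => u j - if j = k then t else 0) k, esymm_split u k]
  have hprod : ∀ n, ∀ S ∈ (univ.erase k).powersetCard n,
      (∏ j ∈ S, (u j - if j = k then t else 0)) = ∏ j ∈ S, u j := by
    intro n S hS
    refine prod_congr rfl fun j hj => ?_
    have : j ≠ k := by
      have := (mem_powersetCard.mp hS).1 hj
      exact (mem_erase.mp this).1
    simp [this]
  rw [sum_congr rfl (hprod (m+1)), sum_congr rfl (hprod m)]
  have : (u k - if k = k then t else 0) = u k - t := by simp
  rw [this]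
  unfold esymmAway
  ring

lemma sum_esymmAway {K : ℕ} (u : Fin K → ℝ) (m : ℕ) :
    ∑ k, esymmAway m k u = ((K - m : ℕ) : ℝ) * esymm m u := by
  unfold esymmAway esymm
  have key : ∀ k : Fin K, (univ.erase k).powersetCard m
      = (univ.powersetCard m).filter (fun S => k ∉ S) := by
    intro k; ext S
    simp only [mem_powersetCard, mem_filter, subset_erase, subset_univ, true_and]
    tauto
  simp_rw [key, sum_filter]
  rw [Finset.sum_comm, mul_sum]
  refine sum_congr rfl fun S hS => ?_
  have hcard : S.card = m := (mem_powersetCard.mp hS).2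
  rw [← sum_filter]
  rw [sum_const, nsmul_eq_mul]
  have : (univ.filter fun k => k ∉ S) = Sᶜ := by ext; simp
  rw [this, card_compl, hcard, Fintype.card_fin]

lemma D_zero (K : ℕ) (u : Fin K → ℝ) : D 0 K u = ∏ j, u j := by
  unfold D
  rw [Finset.sum_range_succ]
  have h0 : ∀ m ∈ Finset.range K, rise (-((0:ℕ):ℝ)) (K - m) * esymm m u = 0 := by
    intro m hm
    have hm' : m < K := Finset.mem_range.mp hm
    obtain ⟨n, hn⟩ : ∃ n, K - m = n + 1 := ⟨K - m - 1, by omega⟩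
    rw [hn, rise]
    rw [Finset.prod_eq_zero (Finset.mem_range.mpr n.succ_pos) (by simp)]
    ring
  rw [Finset.sum_eq_zero h0, Nat.sub_self]
  have : rise (-((0:ℕ):ℝ)) 0 = 1 := by simp [rise]
  rw [this, zero_add, one_mul]
  unfold esymm
  have hps : Finset.powersetCard K (Finset.univ : Finset (Fin K)) = {Finset.univ} := by
    have h := Finset.powersetCard_self (Finset.univ : Finset (Fin K))
    rwa [Finset.card_univ, Fintype.card_fin] at h
  rw [hps, Finset.sum_singleton]

lemma D_sub (H K : ℕ) (u : Fin K → ℝ) (k : Fin K) (t : ℝ) :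
    D H K (fun j => u j - if j = k then t else 0) = D H K u - t * Dk H k u := by
  unfold D Dk
  rw [Finset.sum_range_succ' _ K,
    Finset.sum_range_succ' (fun m => rise (-(H:ℝ)) (K - m) * esymm m u) K]
  have hterm : ∀ m, rise (-(H:ℝ)) (K - (m+1)) * esymm (m+1) (fun j => u j - if j = k then t else 0)
      = rise (-(H:ℝ)) (K-1-m) * esymm (m+1) u - t * (rise (-(H:ℝ)) (K-1-m) * esymmAway m k u) := by
    intro m
    rw [esymm_sub, show K - (m+1) = K-1-m from by omega]
    ring
  have hterm2 : ∀ m, rise (-(H:ℝ)) (K - (m+1)) * esymm (m+1) u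
      = rise (-(H:ℝ)) (K-1-m) * esymm (m+1) u := by
    intro m; rw [show K - (m+1) = K-1-m from by omega]
  rw [Finset.sum_congr rfl (fun m _ => hterm m),
    Finset.sum_congr rfl (fun m _ => hterm2 m),
    Finset.sum_sub_distrib, ← Finset.mul_sum, esymm_zero, esymm_zero]
  ring

lemma Dk_sum (H K : ℕ) (u : Fin K → ℝ) :
    ∑ k, Dk H k u = D H K u - D (H + 1) K u := by
  have hc : ∀ j : ℕ, rise (-((H+1:ℕ):ℝ)) j = rise (-(H:ℝ)) j - j * rise (-(H:ℝ)) (j-1) := by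
    intro j
    have : -((H+1:ℕ):ℝ) = -(H:ℝ) - 1 := by push_cast; ring
    rw [this, rise_pred]
  unfold Dk D
  rw [Finset.sum_comm]
  rw [← Finset.sum_sub_distrib]
  simp_rw [← sub_mul, hc, ← Finset.mul_sum, sum_esymmAway]
  rw [Finset.sum_range_succ]
  have hlast : (rise (-(H:ℝ)) (K-K) - (rise (-(H:ℝ)) (K-K) - ((K-K:ℕ):ℝ) * rise (-(H:ℝ)) (K-K-1))) * esymm K u = 0 := by
    simp
  rw [hlast, add_zero]
  refine Finset.sum_congr rfl fun m hm => ?_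
  have hm' : m < K := Finset.mem_range.mp hm
  have h1 : K - 1 - m = K - m - 1 := by omega
  rw [h1]
  ring

lemma D_succ_eq (H K : ℕ) (u r : Fin K → ℝ) (hr : ∀ k, 0 < r k)
    (hsum : ∑ k, r k = 1) :
    D (H + 1) K u = ∑ k, r k * D H K (fun j => u j - if j = k then 1 / r k else 0) := by
  have h1 : ∀ k, r k * D H K (fun j => u j - if j = k then 1 / r k else 0)
      = r k * D H K u - Dk H k u := by
    intro k
    rw [D_sub, mul_sub, ← mul_assoc, mul_one_div_cancel (hr k).ne', one_mul]
  rw [Finset.sum_congr rfl (fun k _ => h1 k), Finset.sum_sub_distrib,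
    ← Finset.sum_mul, hsum, Dk_sum]
  ring

/-- Exact recursive achievability. -/
def Ex (K : ℕ) : ℕ → (Fin K → ℝ) → Prop
  | 0, v => ∃ r ∈ simplexInt K, ∀ k, v k = 1 / r k
  | H + 1, v => ∃ r ∈ simplexInt K, ∀ k,
      Ex K H (fun j => v j - if j = k then 1 / r k else 0)

lemma ex_pos (K : ℕ) (hK : 1 ≤ K) :
    ∀ (H' : ℕ) (v u : Fin K → ℝ), Ex K H' v → (∀ k, v k ≤ u k) →
      (∃ k0, v k0 < u k0) → 0 < D (H' + 1) K u := by
  intro H'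
  induction H' with
  | zero =>
    rintro v u ⟨r, ⟨hrpos, hrsum⟩, hvr⟩ hle ⟨k0, hlt⟩
    rw [D_succ_eq 0 K u r hrpos hrsum]
    have hterm : ∀ k, r k * D 0 K (fun j => u j - if j = k then 1 / r k else 0)
        = r k * ((u k - 1 / r k) * ∏ j ∈ univ.erase k, u j) := by
      intro k
      rw [D_zero]
      congr 1
      rw [← Finset.mul_prod_erase _ _ (Finset.mem_univ k), if_pos rfl]
      congr 1
      refine Finset.prod_congr rfl fun j hj => ?_
      rw [if_neg (Finset.mem_erase.mp hj).1, sub_zero]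
    rw [Finset.sum_congr rfl (fun k _ => hterm k)]
    have hupos : ∀ j, 0 < u j := fun j => lt_of_lt_of_le (by
      rw [hvr j]; exact one_div_pos.mpr (hrpos j)) (hle j)
    apply Finset.sum_pos'
    · intro k _
      apply mul_nonneg (hrpos k).le
      apply mul_nonneg
      · have := hle k; rw [hvr k] at this; linarith
      · exact (Finset.prod_pos fun j _ => hupos j).le
    · refine ⟨k0, Finset.mem_univ _, ?_⟩
      apply mul_pos (hrpos k0)
      apply mul_pos
      · have := hlt; rw [hvr k0] at this; linarith
      · exact Finset.prod_pos fun j _ => hupos j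
  | succ H' ih =>
    rintro v u ⟨r, ⟨hrpos, hrsum⟩, hsub⟩ hle ⟨k0, hlt⟩
    rw [D_succ_eq (H' + 1) K u r hrpos hrsum]
    have : Nonempty (Fin K) := ⟨⟨0, hK⟩⟩
    apply Finset.sum_pos
    · intro k _
      refine mul_pos (hrpos k) (ih _ _ (hsub k) (fun j => ?_) ⟨k0, ?_⟩)
      · exact sub_le_sub_right (hle j) _
      · exact sub_lt_sub_right hlt _
    · exact Finset.univ_nonempty

def emptyHist (n K : ℕ) : Fin ((0 : Fin (n+1)).val) → Fin K :=
  fun i => absurd i.isLt (by simp)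

lemma ach_ex (K : ℕ) : ∀ (H' : ℕ) (v : Fin K → ℝ), Achievable K H' v → Ex K H' v := by
  intro H'
  induction H' with
  | zero =>
    rintro v ⟨Ψ, hsim, hpay⟩
    refine ⟨Ψ 0 (emptyHist 0 K), hsim _ _, fun k => ?_⟩
    have h := hpay (fun _ => k)
    rw [Fin.sum_univ_one] at h
    rw [if_pos rfl] at h
    have hΨ : Ψ (0 : Fin 1) (fun i => (fun _ : Fin 1 => k) (Fin.castLE (0 : Fin 1).isLt.le i))
        = Ψ 0 (emptyHist 0 K) :=
      congrArg (Ψ 0) (funext fun i => absurd i.isLt (by simp))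
    rw [hΨ] at h
    exact h.symm
  | succ H' ih =>
    rintro v ⟨Ψ, hsim, hpay⟩
    refine ⟨Ψ 0 (emptyHist (H' + 1) K), hsim _ _, fun k => ?_⟩
    apply ih
    refine ⟨fun h hist => Ψ h.succ (Fin.cases k hist), fun h hist => hsim _ _, fun q' => ?_⟩
    have h := hpay (Fin.cases k q')
    have hlast : Fin.cases (motive := fun _ => Fin K) k q' (Fin.last (H' + 1))
        = q' (Fin.last H') := by
      rw [← Fin.succ_last]; exact Fin.cases_succ _
    rw [Fin.sum_univ_succ, hlast] at h
    have hq0 : Fin.cases (motive := fun _ => Fin K) k q' (0 : Fin (H' + 2)) = k :=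
      Fin.cases_zero
    rw [hq0] at h
    have hΨ0 : Ψ 0 (fun i => Fin.cases (motive := fun _ => Fin K) k q'
          (Fin.castLE (0 : Fin (H' + 2)).isLt.le i))
        = Ψ 0 (emptyHist (H' + 1) K) :=
      congrArg (Ψ 0) (funext fun i => absurd i.isLt (by simp))
    rw [hΨ0] at h
    have hh : ∀ i : Fin (H' + 1),
        (fun j : Fin i.succ.val => Fin.cases (motive := fun _ => Fin K) k q'
            (Fin.castLE i.succ.isLt.le j))
        = Fin.cases k (fun j => q' (Fin.castLE i.isLt.le j)) := by
      intro i
      funext j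
      induction j using Fin.cases with
      | zero =>
        have h0 : Fin.castLE i.succ.isLt.le (0 : Fin (i.val + 1)) = 0 := rfl
        rw [h0, Fin.cases_zero, Fin.cases_zero]
      | succ j' =>
        have hcast : Fin.castLE i.succ.isLt.le j'.succ
            = Fin.succ (Fin.castLE i.isLt.le j') := by
          apply Fin.ext; simp
        rw [hcast, Fin.cases_succ, Fin.cases_succ]
    simp only [Fin.cases_succ, hh] at h
    beta_reduce
    have hgoal : (∑ i : Fin (H' + 1),
        if q' i = q' (Fin.last H')
        then 1 / Ψ i.succ (Fin.cases k (fun j => q' (Fin.castLE i.isLt.le j)))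
          (q' (Fin.last H'))
        else 0)
        = v (q' (Fin.last H'))
          - (if k = q' (Fin.last H')
             then 1 / Ψ 0 (emptyHist (H' + 1) K) (q' (Fin.last H')) else 0) := by
      linarith [h]
    rw [hgoal]
    by_cases hk : q' (Fin.last H') = k
    · subst hk; rw [if_pos rfl]
    · rw [if_neg hk, if_neg (fun hh' => hk hh'.symm), sub_zero]

end BookmakingAux

/-- For `H = H'+1 ≥ 1`, `K ≥ 1` and `v` an `H`-achievable vector: any vector `u`
strictly dominating `v` coordinate-wise satisfies `D_{H,K}(u) > 0`. -/
theorem dominating_vector_positive (K H' : ℕ) (hK : 1 ≤ K) (v : Fin K → ℝ)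
    (hv : Achievable K H' v) (u : Fin K → ℝ) (hu : ∀ k, v k ≤ u k) (hne : u ≠ v) :
    0 < D (H' + 1) K u := by
  obtain ⟨k0, hk0⟩ := Function.ne_iff.mp hne
  exact BookmakingAux.ex_pos K hK H' v u (BookmakingAux.ach_ex K H' v hv) hu
    ⟨k0, lt_of_le_of_ne (hu k0) (fun hh => hk0 hh.symm)⟩
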